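/- arXiv:1704.01866 — 2 statements merged into one kernel-verified Lean document; each statement's English description precedes it below -/
import Mathlib

section
/- For any intuitionistic Kripke model M = ⟨W,R,V⟩, any world w ∈ W, and standard formulas φ, ψ, truth at w satisfies the standard intuitionistic Kripke clauses: M,w ⊨ p iff V(w,p)=1; M,w ⊭ ⊥; M,w ⊨ φ∧ψ iff M,w ⊨ φ and M,w ⊨ ψ; M,w ⊨ φ∨ψ iff M,w ⊨ φ or M,w ⊨ ψ; M,w ⊨ φ→ψ iff for all v ∈ R[w], M,v ⊨ φ implies M,v ⊨ ψ. -/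
/-- Formulas of the language L: atoms, ⊥, ∧, ∨, →, and inquisitive disjunction ⩾. -/
inductive Formula (P : Type) : Type
  | atom : P → Formula P
  | bot  : Formula P
  | and  : Formula P → Formula P → Formula P
  | or   : Formula P → Formula P → Formula P
  | impl : Formula P → Formula P → Formula P
  | iorr : Formula P → Formula P → Formula P

namespace Formula

/-- Negation ¬φ := φ → ⊥. -/
def neg {P : Type} (φ : Formula P) : Formula P := Formula.impl φ Formula.bot

/-- Polar question ?φ := φ ⩾ ¬φ. -/
def question {P : Type} (φ : Formula P) : Formula P := Formula.iorr φ φ.neg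

/-- A standard formula contains no occurrence of inquisitive disjunction ⩾. -/
def standard {P : Type} : Formula P → Prop
  | atom _ => True
  | bot => True
  | and φ ψ => φ.standard ∧ ψ.standard
  | or φ ψ => φ.standard ∧ ψ.standard
  | impl φ ψ => φ.standard ∧ ψ.standard
  | iorr _ _ => False

end Formula

/-- An intuitionistic Kripke model: a partially ordered set of worlds with a
persistent valuation. -/
structure KripkeModel (P : Type) where
  W : Type
  R : W → W → Prop
  refl : ∀ w, R w w
  antisymm : ∀ w v, R w v → R v w → w = v
  trans : ∀ w v u, R w v → R v u → R w u
  V : W → P → Prop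
  persistent : ∀ w v p, R w v → V w p → V v p

/-- R[t], the up-set generated by a team t. -/
def KripkeModel.upset {P : Type} (M : KripkeModel P) (t : Set M.W) : Set M.W :=
  {v | ∃ w ∈ t, M.R w v}

/-- The support relation M,t ⊨ φ between teams and formulas. -/
def support {P : Type} (M : KripkeModel P) : Formula P → Set M.W → Prop
  | .atom p, t => ∀ w ∈ t, M.V w p
  | .bot, t => t = ∅
  | .and φ ψ, t => support M φ t ∧ support M ψ t
  | .or φ ψ, t => ∃ t₁ t₂, t = t₁ ∪ t₂ ∧ support M φ t₁ ∧ support M ψ t₂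
  | .impl φ ψ, t => ∀ t', t' ⊆ M.upset t → support M φ t' → support M ψ t'
  | .iorr φ ψ, t => support M φ t ∨ support M ψ t

/-- Truth at a world: M,w ⊨ φ iff M,{w} ⊨ φ. -/
def truth {P : Type} (M : KripkeModel P) (w : M.W) (φ : Formula P) : Prop :=
  support M φ {w}

/-- A formula is truth-conditional if support at a team amounts to truth at each world. -/
def truthConditional {P : Type} (φ : Formula P) : Prop :=
  ∀ (M : KripkeModel P) (t : Set M.W), support M φ t ↔ ∀ w ∈ t, truth M w φ

/-- The partial truth-value function: `tvalIs M w φ b` says T(w,φ) is defined with value b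
(b = true for value 1, i.e. M,w ⊨ φ; b = false for value 0, i.e. M,w ⊨ ¬φ). -/
def tvalIs {P : Type} (M : KripkeModel P) (w : M.W) (φ : Formula P) : Bool → Prop
  | true => truth M w φ
  | false => truth M w φ.neg

/-!
Support is downward closed and the empty team supports every formula, so a singleton team
supports `φ ∨ ψ` exactly when it supports one of the disjuncts (the other part of the split being
empty or the singleton itself). For the implication, the Kripke clause quantifies over worlds
above `w` while support quantifies over teams inside `R[w]`; the two agree because a standard
formula is flat: a team supports it as soon as each of its worlds does.
-/

namespace KripkeModel

variable {P : Type} (M : KripkeModel P)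

lemma upset_empty : M.upset ∅ = ∅ := by
  simp [upset]

lemma upset_mono {t t' : Set M.W} (h : t' ⊆ t) : M.upset t' ⊆ M.upset t :=
  fun _ ⟨w, hw, hwv⟩ => ⟨w, h hw, hwv⟩

lemma singleton_subset_upset_singleton {w v : M.W} (hwv : M.R w v) : {v} ⊆ M.upset {w} := by
  simpa [upset] using hwv

end KripkeModel

section Support

variable {P : Type} {M : KripkeModel P}

lemma support_empty (φ : Formula P) : support M φ ∅ := by
  induction φ with
  | atom p => simp [support]
  | bot => rfl
  | and φ ψ ihφ ihψ => exact ⟨ihφ, ihψ⟩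
  | or φ ψ ihφ ihψ => exact ⟨∅, ∅, (Set.union_self ∅).symm, ihφ, ihψ⟩
  | impl φ ψ ihφ ihψ =>
    intro t' ht' _
    rw [M.upset_empty, Set.subset_empty_iff] at ht'
    exact ht' ▸ ihψ
  | iorr φ ψ ihφ _ => exact Or.inl ihφ

lemma support_of_subset {φ : Formula P} {t t' : Set M.W} (h : support M φ t) (hsub : t' ⊆ t) :
    support M φ t' := by
  induction φ generalizing t t' with
  | atom p => exact fun w hw => h w (hsub hw)
  | bot => exact Set.subset_empty_iff.mp (h ▸ hsub)
  | and φ ψ ihφ ihψ => exact ⟨ihφ h.1 hsub, ihψ h.2 hsub⟩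
  | or φ ψ ihφ ihψ =>
    obtain ⟨t₁, t₂, rfl, h₁, h₂⟩ := h
    refine ⟨t₁ ∩ t', t₂ ∩ t', ?_, ihφ h₁ Set.inter_subset_left, ihψ h₂ Set.inter_subset_left⟩
    rw [← Set.union_inter_distrib_right, Set.inter_eq_right.mpr hsub]
  | impl φ ψ _ _ => exact fun s hs hsφ => h s (hs.trans (M.upset_mono hsub)) hsφ
  | iorr φ ψ ihφ ihψ => exact h.imp (ihφ · hsub) (ihψ · hsub)

lemma truth_of_mem {φ : Formula P} {t : Set M.W} {w : M.W} (hw : w ∈ t) (h : support M φ t) :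
    truth M w φ :=
  support_of_subset h (Set.singleton_subset_iff.mpr hw)

lemma truth_atom (w : M.W) (p : P) : truth M w (.atom p) ↔ M.V w p := by
  simp [truth, support]

lemma not_truth_bot (w : M.W) : ¬ truth M w .bot :=
  Set.singleton_ne_empty w

lemma truth_or (w : M.W) (φ ψ : Formula P) :
    truth M w (.or φ ψ) ↔ truth M w φ ∨ truth M w ψ := by
  constructor
  · rintro ⟨t₁, t₂, ht, h₁, h₂⟩
    have hw : w ∈ t₁ ∪ t₂ := ht ▸ rfl
    exact hw.imp (truth_of_mem · h₁) (truth_of_mem · h₂)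
  · rintro (h | h)
    · exact ⟨{w}, ∅, (Set.union_empty _).symm, h, support_empty ψ⟩
    · exact ⟨∅, {w}, (Set.empty_union _).symm, support_empty φ, h⟩

lemma truth_of_truth_impl {φ ψ : Formula P} {w v : M.W} (h : truth M w (.impl φ ψ))
    (hwv : M.R w v) (hv : truth M v φ) : truth M v ψ :=
  h {v} (M.singleton_subset_upset_singleton hwv) hv

lemma support_of_forall_truth {φ : Formula P} (hφ : φ.standard) {t : Set M.W}
    (h : ∀ w ∈ t, truth M w φ) : support M φ t := by
  induction φ generalizing t with
  | atom p => exact fun w hw => (truth_atom w p).mp (h w hw)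
  | bot => exact Set.eq_empty_of_forall_notMem fun w hw => not_truth_bot w (h w hw)
  | and φ ψ ihφ ihψ =>
    exact ⟨ihφ hφ.1 fun w hw => (h w hw).1, ihψ hφ.2 fun w hw => (h w hw).2⟩
  | or φ ψ ihφ ihψ =>
    refine ⟨{w ∈ t | truth M w φ}, {w ∈ t | truth M w ψ}, ?_,
      ihφ hφ.1 fun w hw => hw.2, ihψ hφ.2 fun w hw => hw.2⟩
    ext w
    simp only [Set.mem_union, Set.mem_sep_iff, ← and_or_left, iff_self_and]
    exact fun hw => (truth_or w φ ψ).mp (h w hw)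
  | impl φ ψ _ ihψ =>
    intro s hs hsφ
    refine ihψ hφ.2 fun v hv => ?_
    obtain ⟨u, hu, huv⟩ := hs hv
    exact truth_of_truth_impl (h u hu) huv (truth_of_mem hv hsφ)
  | iorr => exact hφ.elim

lemma truth_impl (w : M.W) (φ : Formula P) {ψ : Formula P} (hψ : ψ.standard) :
    truth M w (.impl φ ψ) ↔ ∀ v, M.R w v → truth M v φ → truth M v ψ := by
  refine ⟨fun h v => truth_of_truth_impl h, fun h s hs hsφ => ?_⟩
  refine support_of_forall_truth hψ fun v hv => ?_
  obtain ⟨u, rfl, hwv⟩ := hs hv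
  exact h v hwv (truth_of_mem hv hsφ)

end Support

theorem kripke_semantics_recovered_general {P : Type} (M : KripkeModel P) (w : M.W)
    (φ ψ : Formula P) (hψ : ψ.standard) :
    (∀ p : P, truth M w (Formula.atom p) ↔ M.V w p) ∧
    (¬ truth M w Formula.bot) ∧
    (truth M w (Formula.and φ ψ) ↔ truth M w φ ∧ truth M w ψ) ∧
    (truth M w (Formula.or φ ψ) ↔ truth M w φ ∨ truth M w ψ) ∧
    (truth M w (Formula.impl φ ψ) ↔ ∀ v, M.R w v → truth M v φ → truth M v ψ) :=
  ⟨truth_atom w, not_truth_bot w, Iff.rfl, truth_or w φ ψ, truth_impl w φ hψ⟩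

/-- truth at a world satisfies the standard intuitionistic Kripke clauses
for standard formulas. -/
theorem kripke_semantics_recovered {P : Type} (M : KripkeModel P) (w : M.W)
    (φ ψ : Formula P) (hφ : φ.standard) (hψ : ψ.standard) :
    (∀ p : P, truth M w (Formula.atom p) ↔ M.V w p) ∧
    (¬ truth M w Formula.bot) ∧
    (truth M w (Formula.and φ ψ) ↔ truth M w φ ∧ truth M w ψ) ∧
    (truth M w (Formula.or φ ψ) ↔ truth M w φ ∨ truth M w ψ) ∧
    (truth M w (Formula.impl φ ψ) ↔ ∀ v, M.R w v → truth M v φ → truth M v ψ) :=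
  kripke_semantics_recovered_general M w φ ψ hψ
end

section
/- Characterization of dependency: for any intuitionistic Kripke model M, team t, and atomic propositions p, q: M,t ⊨ ?p → ?q if and only if for all w,w' ∈ R[t], if T(w,p) and T(w',p) are both defined and equal, then T(w,q) and T(w',q) are both defined and equal. -/
/-!
A team supports `?φ` exactly when `T(·,φ)` is defined and constant on it (for `φ` an atom, whose
support and that of its negation are truth-conditional). So `?p → ?q` holds at `t` iff every
subteam of `R[t]` on which `T(·,p)` is constant also has `T(·,q)` constant. Testing this on
two-element teams gives the pairwise condition; conversely, since `T(·,q)` is single-valued,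
pairwise agreement with one fixed world of a subteam makes `T(·,q)` constant on all of it.
-/

theorem forall_subset_exists_const_iff_pairwise {α β : Type*} [Nonempty β]
    {T S : α → β → Prop} (hS : ∀ a b b', S a b → S a b' → b = b') (U : Set α) :
    (∀ s ⊆ U, (∃ b, ∀ a ∈ s, T a b) → ∃ b, ∀ a ∈ s, S a b) ↔
      ∀ a ∈ U, ∀ a' ∈ U, (∃ b, T a b ∧ T a' b) → ∃ b, S a b ∧ S a' b := by
  constructor
  · rintro h a ha a' ha' ⟨b, hTa, hTa'⟩
    obtain ⟨c, hc⟩ := h {a, a'} (Set.insert_subset ha (Set.singleton_subset_iff.2 ha'))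
      ⟨b, by simpa using And.intro hTa hTa'⟩
    exact ⟨c, by simpa using hc⟩
  · rintro h s hsU ⟨b, hT⟩
    rcases s.eq_empty_or_nonempty with rfl | ⟨a₀, ha₀⟩
    · exact ⟨Classical.arbitrary β, by simp⟩
    have agree : ∀ a ∈ s, ∃ c, S a₀ c ∧ S a c := fun a ha =>
      h a₀ (hsU ha₀) a (hsU ha) ⟨b, hT a₀ ha₀, hT a ha⟩
    obtain ⟨c₀, hc₀, -⟩ := agree a₀ ha₀
    refine ⟨c₀, fun a ha => ?_⟩
    obtain ⟨c, hc, hSa⟩ := agree a ha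
    rwa [hS a₀ c c₀ hc hc₀] at hSa

namespace KripkeModel

variable {P : Type} (M : KripkeModel P)

theorem mem_upset_singleton {w v : M.W} : v ∈ M.upset {w} ↔ M.R w v := by
  simp [upset]

theorem upset_eq_biUnion (s : Set M.W) : M.upset s = ⋃ w ∈ s, M.upset {w} := by
  ext v
  simp [upset]

end KripkeModel

section Support

variable {P : Type} (M : KripkeModel P)

theorem support_impl_iff (φ ψ : Formula P) (t : Set M.W) :
    support M (φ.impl ψ) t ↔ ∀ t' ⊆ M.upset t, support M φ t' → support M ψ t' :=
  Iff.rfl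

theorem truth_atom_iff (r : P) (w : M.W) : truth M w (.atom r) ↔ M.V w r := by
  simp [truth, support]

theorem support_atom_neg_iff (r : P) (s : Set M.W) :
    support M (Formula.atom r).neg s ↔ ∀ v ∈ M.upset s, ¬ M.V v r := by
  constructor
  · intro h v hv hVv
    exact Set.singleton_ne_empty v
      (h {v} (Set.singleton_subset_iff.2 hv) ((truth_atom_iff M r v).2 hVv))
  · intro h t' ht' hsupp
    exact Set.eq_empty_of_forall_notMem fun v hv => h v (ht' hv) (hsupp v hv)

theorem tvalIs_unique (w : M.W) (φ : Formula P) (b b' : Bool) :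
    tvalIs M w φ b → tvalIs M w φ b' → b = b' := by
  have incompatible : truth M w φ → ¬ truth M w φ.neg := fun hφ hneg =>
    Set.singleton_ne_empty w
      (hneg {w} (Set.singleton_subset_iff.2 ((M.mem_upset_singleton).2 (M.refl w))) hφ)
  cases b <;> cases b' <;> simp only [tvalIs] <;> grind

theorem support_question_iff {φ : Formula P} (hφ : truthConditional φ)
    (hnφ : truthConditional φ.neg) (s : Set M.W) :
    support M φ.question s ↔ ∃ b, ∀ w ∈ s, tvalIs M w φ b := by
  simp only [Formula.question, support, hφ M s, hnφ M s]
  constructor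
  · rintro (h | h)
    exacts [⟨true, h⟩, ⟨false, h⟩]
  · rintro ⟨_ | _, h⟩
    exacts [Or.inr h, Or.inl h]

end Support

theorem truthConditional_atom {P : Type} (r : P) : truthConditional (Formula.atom r) := by
  intro M t
  simp only [truth_atom_iff]
  rfl

theorem truthConditional_atom_neg {P : Type} (r : P) : truthConditional (Formula.atom r).neg := by
  intro M t
  simp only [truth, support_atom_neg_iff, KripkeModel.upset_eq_biUnion M t, Set.mem_iUnion]
  grind

/-- characterization of dependency: M,t ⊨ ?p → ?q iff for all
w, w' ∈ R[t], T(w,p) ≐ T(w',p) implies T(w,q) ≐ T(w',q). -/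
theorem dependency_characterization {P : Type} (M : KripkeModel P) (t : Set M.W)
    (p q : P) :
    support M (Formula.impl (Formula.atom p).question (Formula.atom q).question) t ↔
      ∀ w ∈ M.upset t, ∀ w' ∈ M.upset t,
        (∃ b : Bool, tvalIs M w (Formula.atom p) b ∧ tvalIs M w' (Formula.atom p) b) →
        (∃ b : Bool, tvalIs M w (Formula.atom q) b ∧ tvalIs M w' (Formula.atom q) b) := by
  simp only [support_impl_iff,
    support_question_iff M (truthConditional_atom p) (truthConditional_atom_neg p),
    support_question_iff M (truthConditional_atom q) (truthConditional_atom_neg q)]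
  exact forall_subset_exists_const_iff_pairwise (tvalIs_unique M · _) (M.upset t)
end
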